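/- arXiv:1708.06974 — 2 statements merged into one kernel-verified Lean document; each statement's English description precedes it below -/
import Mathlib

section
/- The set G has cardinality exactly (q^5 − 2q^3 + q^2)/2, and in fact G = G₁ ∪ G₂ ∪ G₃. -/
/-- Tuples `(i, j, k, m, n₁, …, n_{q-2})` of nonnegative integers; the coordinate
`n : Fin (q-2) → ℕ` encodes `n_s` via `n_s = n ⟨s-1, _⟩`, i.e. index `t : Fin (q-2)`
corresponds to the paper's index `s = t + 1`. -/
abbrev GKTup (q : ℕ) := ℕ × ℕ × ℕ × ℕ × (Fin (q - 2) → ℕ)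

/-- `φ(i,j,k,m,n₁,…,n_{q-2}) = i q^3 + j + k q + m (q^2+1) + Σ_{s=1}^{q-2} n_s (s+1) q^2 + 1`. -/
def gkPhi (q : ℕ) (t : GKTup q) : ℕ :=
  t.1 * q ^ 3 + t.2.1 + t.2.2.1 * q + t.2.2.2.1 * (q ^ 2 + 1) +
    (∑ s : Fin (q - 2), t.2.2.2.2 s * ((s.1 + 2) * q ^ 2)) + 1

/-- The weight `i + j + k + m q + Σ_{s=1}^{q-2} n_s ((s+1) q - s)`. -/
def gkWt (q : ℕ) (t : GKTup q) : ℕ :=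
  t.1 + t.2.1 + t.2.2.1 + t.2.2.2.1 * q +
    ∑ s : Fin (q - 2), t.2.2.2.2 s * ((s.1 + 2) * q - (s.1 + 1))

/-- The set `𝒢` of tuples with `j ≤ q - 1` and weight at most `q^2 - 2`. -/
def gkCalG (q : ℕ) : Set (GKTup q) :=
  {t | t.2.1 ≤ q - 1 ∧ gkWt q t ≤ q ^ 2 - 2}

/-- The set of gaps `G = φ(𝒢)`. -/
def gkG (q : ℕ) : Set ℕ := gkPhi q '' gkCalG q

/-- `𝒢₁`: tuples in `𝒢` with `j = 0` and all `n_s = 0`. -/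
def gkCalG1 (q : ℕ) : Set (GKTup q) :=
  {t | t ∈ gkCalG q ∧ t.2.1 = 0 ∧ ∀ s, t.2.2.2.2 s = 0}

/-- `𝒢₂`: tuples in `𝒢` with `1 ≤ j ≤ q - 1`, `k ≤ q - 1`, `j + m ≤ q - 1` and all `n_s = 0`. -/
def gkCalG2 (q : ℕ) : Set (GKTup q) :=
  {t | t ∈ gkCalG q ∧ 1 ≤ t.2.1 ∧ t.2.1 ≤ q - 1 ∧ t.2.2.1 ≤ q - 1 ∧
    t.2.1 + t.2.2.2.1 ≤ q - 1 ∧ ∀ s, t.2.2.2.2 s = 0}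

/-- `𝒢₃`: tuples in `𝒢` with `m = 0`, `k ≤ q - 1`, exactly one `n_s = 1` (the other `n`'s
being zero) and `i + k + (s+1) q ≥ q^2 - 1`. -/
def gkCalG3 (q : ℕ) : Set (GKTup q) :=
  {t | t ∈ gkCalG q ∧ t.2.2.2.1 = 0 ∧ t.2.2.1 ≤ q - 1 ∧
    ∃ s : Fin (q - 2), t.2.2.2.2 s = 1 ∧ (∀ s', s' ≠ s → t.2.2.2.2 s' = 0) ∧
      q ^ 2 - 1 ≤ t.1 + t.2.2.1 + (s.1 + 2) * q}


/-!
Every tuple of `𝒢` can be moved into `𝒢₁ ∪ 𝒢₂ ∪ 𝒢₃` by steps that keep `φ` and stay in `𝒢`, all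
based on `q · q + 1 = q² + 1`, `q · q² = q³` and `(s + 2) q² + (t + 2) q² = (s + t + 4) q²`:
two units `n_s, n_t` merge into one or carry `q³` into `i`; a single unit `n_s` moves up to
`n_{s+1}`, paying `q²` out of `k q` or out of `m (q² + 1)`, until it is carried into `i`, spread
over `j, k, m`, or the tuple lies in `𝒢₃`; once `n = 0`, carrying `q` from `k` and `1` from `j`
into `m`, and at last `j` with part of `m` into `k`, ends in `𝒢₁` or `𝒢₂`. Each step lowers
`∑ n_s`, or raises the index of a single unit, or lowers `k`.

On `𝒢₁ ∪ 𝒢₂ ∪ 𝒢₃` one has `φ - 1 = r + q (w + q² i)` with `r = j + m < q` and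
`w = k + q (m + ∑ (s + 2) n_s) < q²`; these base-`q` digits determine the tuple, so `φ` is
injective there, and `|G| = |𝒢₁| + |𝒢₂| + |𝒢₃|` is a sum of iterated sums of quadratic
polynomials.
-/

open Finset

section NatVector

variable {ι : Type*} [DecidableEq ι]

theorem exists_eq_add_single_of_ne_zero {n : ι → ℕ} (h : n ≠ 0) :
    ∃ n' s, n = n' + (Pi.single s 1 : ι → ℕ) := by
  obtain ⟨s, hs⟩ : ∃ s, n s ≠ 0 := Function.ne_iff.mp h
  refine ⟨n - Pi.single s 1, s, funext fun x => ?_⟩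
  by_cases hx : x = s
  · subst hx
    simp only [Pi.add_apply, Pi.sub_apply, Pi.single_eq_same]
    omega
  · simp [hx]

theorem eq_zero_or_eq_single_or_eq_add_single_add_single (n : ι → ℕ) :
    n = 0 ∨ (∃ s, n = (Pi.single s 1 : ι → ℕ)) ∨
      ∃ n' s t, n = n' + (Pi.single s 1 : ι → ℕ) + Pi.single t 1 := by
  rcases eq_or_ne n 0 with h | h
  · exact .inl h
  obtain ⟨n', t, rfl⟩ := exists_eq_add_single_of_ne_zero h
  rcases eq_or_ne n' 0 with h' | h'
  · exact .inr (.inl ⟨t, by simp [h']⟩)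
  obtain ⟨n'', s, rfl⟩ := exists_eq_add_single_of_ne_zero h'
  exact .inr (.inr ⟨n'', s, t, rfl⟩)

variable [Fintype ι]

theorem sum_add_single_one (n : ι → ℕ) (s : ι) :
    ∑ x, (n + Pi.single s 1 : ι → ℕ) x = ∑ x, n x + 1 := by
  simp [sum_add_distrib]

theorem sum_add_single_one_mul (n c : ι → ℕ) (s : ι) :
    ∑ x, (n + Pi.single s 1 : ι → ℕ) x * c x = ∑ x, n x * c x + c s := by
  simp [add_mul, sum_add_distrib, Pi.single_apply]

end NatVector

theorem sum_range_sub_mul_two (n : ℕ) : (∑ k ∈ range n, (n - k)) * 2 = n * (n + 1) := by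
  induction n with
  | zero => simp
  | succ n ih =>
    simp only [sum_range_succ', Nat.add_sub_add_right, Nat.sub_zero, add_mul, ih]
    ring

theorem sum_range_quadratic {R : Type*} [CommRing R] (a b c : R) (n : ℕ) :
    6 * ∑ x ∈ range n, (a + b * x + c * x ^ 2) =
      6 * a * n + 3 * b * (n * (n - 1)) + c * (n * (n - 1) * (2 * n - 1)) := by
  induction n with
  | zero => simp
  | succ n ih =>
    rw [sum_range_succ, mul_add, ih]
    push_cast
    ring

theorem eq_and_eq_of_add_mul_eq {b r r' a a' : ℕ} (hr : r < b) (hr' : r' < b)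
    (h : r + b * a = r' + b * a') : r = r' ∧ a = a' := by
  have hb : 0 < b := by omega
  obtain ⟨h1, h2⟩ := (Nat.div_mod_unique hb).2 ⟨h, hr⟩
  obtain ⟨h1', h2'⟩ := (Nat.div_mod_unique hb).2 ⟨rfl, hr'⟩
  exact ⟨h2.symm.trans h2', h1.symm.trans h1'⟩

theorem eq_and_eq_and_eq_of_digits_eq {q r r' w w' i i' : ℕ} (hr : r < q) (hr' : r' < q)
    (hw : w < q ^ 2) (hw' : w' < q ^ 2)
    (h : r + q * (w + q ^ 2 * i) + 1 = r' + q * (w' + q ^ 2 * i') + 1) :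
    r = r' ∧ w = w' ∧ i = i' := by
  obtain ⟨rfl, h'⟩ := eq_and_eq_of_add_mul_eq hr hr' (Nat.add_right_cancel h)
  exact ⟨rfl, eq_and_eq_of_add_mul_eq hw hw' h'⟩

theorem add_mul_lt_sq {q k m : ℕ} (hk : k < q) (hm : m < q) : k + q * m < q ^ 2 := by
  nlinarith

section GK

variable {q : ℕ}

@[simp] theorem gkPhi_zero (i j k m : ℕ) :
    gkPhi q (i, j, k, m, 0) = i * q ^ 3 + j + k * q + m * (q ^ 2 + 1) + 1 := by
  simp [gkPhi]

@[simp] theorem gkWt_zero (i j k m : ℕ) : gkWt q (i, j, k, m, 0) = i + j + k + m * q := by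
  simp [gkWt]

theorem gkPhi_add_single (i j k m : ℕ) (n : Fin (q - 2) → ℕ) (s : Fin (q - 2)) :
    gkPhi q (i, j, k, m, n + Pi.single s 1) = gkPhi q (i, j, k, m, n) + (s + 2) * q ^ 2 := by
  simp only [gkPhi, sum_add_single_one_mul]
  ring

theorem gkWt_add_single (i j k m : ℕ) (n : Fin (q - 2) → ℕ) (s : Fin (q - 2)) :
    gkWt q (i, j, k, m, n + Pi.single s 1) =
      gkWt q (i, j, k, m, n) + ((s + 2) * q - (s + 1)) := by
  simp only [gkWt, sum_add_single_one_mul]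
  ring

theorem gkPhi_single (i j k m : ℕ) (s : Fin (q - 2)) :
    gkPhi q (i, j, k, m, Pi.single s 1) =
      i * q ^ 3 + j + k * q + m * (q ^ 2 + 1) + (s + 2) * q ^ 2 + 1 := by
  simpa [add_right_comm] using gkPhi_add_single (q := q) i j k m 0 s

theorem gkWt_single (i j k m : ℕ) (s : Fin (q - 2)) :
    gkWt q (i, j, k, m, Pi.single s 1) + (s + 1) = i + j + k + m * q + (s + 2) * q := by
  have hq : 1 ≤ q := by have := s.2; omega
  have : s.1 + 1 ≤ (s + 2) * q := by nlinarith
  have h := gkWt_add_single (q := q) i j k m 0 s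
  rw [zero_add, gkWt_zero] at h
  omega

theorem gkPhi_zero_eq_digits (i j k m : ℕ) :
    gkPhi q (i, j, k, m, 0) = j + m + q * (k + q * m + q ^ 2 * i) + 1 := by
  simp only [gkPhi_zero]; ring

theorem gkPhi_single_eq_digits (i j k : ℕ) (s : Fin (q - 2)) :
    gkPhi q (i, j, k, 0, Pi.single s 1) = j + q * (k + q * (s + 2) + q ^ 2 * i) + 1 := by
  simp only [gkPhi_single]; ring

-- The weight bounds are restated with `q ^ 2 - 2` and `(s + 2) * q - (s + 1)` moved across the
-- inequalities, so that no truncated subtraction is left.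
theorem mk_mem_gkCalG1 {i k m : ℕ} (h : i + k + m * q + 2 ≤ q ^ 2) :
    ((i, 0, k, m, 0) : GKTup q) ∈ gkCalG1 q :=
  ⟨⟨Nat.zero_le _, by rw [gkWt_zero]; omega⟩, rfl, fun _ => rfl⟩

theorem mk_mem_gkCalG2 {i j k m : ℕ} (hj : 1 ≤ j) (hk : k < q) (hjm : j + m < q)
    (h : i + j + k + m * q + 2 ≤ q ^ 2) : ((i, j, k, m, 0) : GKTup q) ∈ gkCalG2 q :=
  ⟨⟨by dsimp only; omega, by rw [gkWt_zero]; omega⟩, hj, by dsimp only; omega, by dsimp only; omega,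
    by dsimp only; omega, fun _ => rfl⟩

theorem mk_mem_gkCalG3 {i j k : ℕ} {s : Fin (q - 2)} (hk : k < q)
    (h : i + j + k + (s + 2) * q + 2 ≤ q ^ 2 + (s + 1)) (h' : q ^ 2 ≤ i + k + (s + 2) * q + 1) :
    ((i, j, k, 0, Pi.single s 1) : GKTup q) ∈ gkCalG3 q := by
  have := gkWt_single (q := q) i j k 0 s
  exact ⟨⟨by dsimp only; omega, by omega⟩, rfl, by dsimp only; omega, s, by simp,
    fun s' hs' => by simp [hs'], by dsimp only; omega⟩

theorem mem_gkCalG1_iff (hq : 2 ≤ q) {t : GKTup q} :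
    t ∈ gkCalG1 q ↔ ∃ i k m, i + k + m * q + 2 ≤ q ^ 2 ∧ (i, 0, k, m, 0) = t := by
  refine ⟨?_, fun ⟨i, k, m, hw, ht⟩ => ht ▸ mk_mem_gkCalG1 hw⟩
  rintro ⟨⟨-, hw⟩, hj, hn⟩
  obtain ⟨i, j, k, m, n⟩ := t
  obtain rfl : n = 0 := funext hn
  obtain rfl : j = 0 := hj
  have : 4 ≤ q ^ 2 := by nlinarith
  exact ⟨i, k, m, by rw [gkWt_zero] at hw; omega, rfl⟩

theorem mem_gkCalG2_iff (hq : 2 ≤ q) {t : GKTup q} :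
    t ∈ gkCalG2 q ↔ ∃ i j k m, 1 ≤ j ∧ k < q ∧ j + m < q ∧
      i + j + k + m * q + 2 ≤ q ^ 2 ∧ (i, j, k, m, 0) = t := by
  refine ⟨?_, fun ⟨i, j, k, m, hj, hk, hjm, hw, ht⟩ => ht ▸ mk_mem_gkCalG2 hj hk hjm hw⟩
  rintro ⟨⟨-, hw⟩, hj, -, hk, hjm, hn⟩
  obtain ⟨i, j, k, m, n⟩ := t
  obtain rfl : n = 0 := funext hn
  have : 4 ≤ q ^ 2 := by nlinarith
  exact ⟨i, j, k, m, hj, by dsimp only at hk; omega, by dsimp only at hjm; omega,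
    by rw [gkWt_zero] at hw; omega, rfl⟩

theorem mem_gkCalG3_iff {t : GKTup q} :
    t ∈ gkCalG3 q ↔ ∃ i j k, ∃ s : Fin (q - 2), k < q ∧
      i + j + k + (s + 2) * q + 2 ≤ q ^ 2 + (s + 1) ∧ q ^ 2 ≤ i + k + (s + 2) * q + 1 ∧
      (i, j, k, 0, (Pi.single s 1 : Fin (q - 2) → ℕ)) = t := by
  refine ⟨?_, fun ⟨i, j, k, s, hk, hw, hik, ht⟩ => ht ▸ mk_mem_gkCalG3 hk hw hik⟩
  rintro ⟨⟨-, hw⟩, hm, hk, s, hs, hn, hik⟩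
  obtain ⟨i, j, k, m, n⟩ := t
  obtain rfl : n = Pi.single s 1 := funext fun x => by
    by_cases hx : x = s
    · subst hx; simpa using hs
    · simpa [hx] using hn x hx
  obtain rfl : m = 0 := hm
  have hq : 3 ≤ q := by have := s.2; omega
  have : 9 ≤ q ^ 2 := by nlinarith
  have := gkWt_single (q := q) i j k 0 s
  exact ⟨i, j, k, s, by dsimp only at hk; omega, by omega, by dsimp only at hik; omega, rfl⟩

def gkReduced (q : ℕ) : Set (GKTup q) := gkCalG1 q ∪ gkCalG2 q ∪ gkCalG3 q

theorem gkPhi_zero_mem_image {i j k m : ℕ} (hj : j < q) (hw : i + j + k + m * q + 2 ≤ q ^ 2) :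
    gkPhi q (i, j, k, m, 0) ∈ gkPhi q '' gkReduced q := by
  induction k using Nat.strong_induction_on generalizing j m with
  | _ k ih =>
  obtain rfl | ⟨j, rfl⟩ : j = 0 ∨ ∃ j', j = j' + 1 := by cases j <;> simp
  · exact ⟨_, .inl (.inl (mk_mem_gkCalG1 (by simpa using hw))), rfl⟩
  by_cases hkq : q ≤ k
  · obtain ⟨k, rfl⟩ : ∃ k', k = k' + q := ⟨k - q, by omega⟩
    have e : gkPhi q (i, j + 1, k + q, m, 0) = gkPhi q (i, j, k, m + 1, 0) := by
      simp only [gkPhi_zero]; ring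
    rw [e]
    exact ih k (by omega) (by omega) (by linarith)
  by_cases hjm : j + 1 + m < q
  · exact ⟨_, .inl (.inr (mk_mem_gkCalG2 (by omega) (by omega) hjm hw)), rfl⟩
  obtain ⟨d, hd⟩ : ∃ d, j + 1 + d = q := ⟨q - (j + 1), by omega⟩
  obtain ⟨e, rfl⟩ : ∃ e, m = d + e := ⟨m - d, by omega⟩
  have e : gkPhi q (i, j + 1, k, d + e, 0) = gkPhi q (i, 0, k + d * q + 1, e, 0) := by
    simp only [gkPhi_zero]; linear_combination hd
  rw [e]
  exact ⟨_, .inl (.inl (mk_mem_gkCalG1 (by linarith))), rfl⟩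

theorem gkPhi_single_mem_image_of_le_sq {i j k : ℕ} {s : Fin (q - 2)} (hj : j < q)
    (hw : i + j + k + (s + 2) * q + 2 ≤ q ^ 2 + (s + 1))
    (hik : i + k + (s + 2) * q + 2 ≤ q ^ 2) :
    gkPhi q (i, j, k, 0, Pi.single s 1) ∈ gkPhi q '' gkReduced q := by
  by_cases hjs : j ≤ s + 2
  · obtain ⟨b, hb⟩ : ∃ b, s.1 + 2 = j + b := ⟨s + 2 - j, by omega⟩
    have e : gkPhi q (i, j, k, 0, Pi.single s 1) = gkPhi q (i, 0, k + b * q, j, 0) := by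
      simp only [gkPhi_single, gkPhi_zero]; linear_combination q ^ 2 * hb
    rw [e]
    exact ⟨_, .inl (.inl (mk_mem_gkCalG1 (by rw [hb] at hik; linarith))), rfl⟩
  · obtain ⟨j, rfl⟩ : ∃ j', j = s + 1 + j' := ⟨j - (s + 1), by omega⟩
    have e : gkPhi q (i, s + 1 + j, k, 0, Pi.single s 1) = gkPhi q (i, j, k + q, s + 1, 0) := by
      simp only [gkPhi_single, gkPhi_zero]; ring
    rw [e]
    exact gkPhi_zero_mem_image (by omega) (by linarith)

theorem gkPhi_single_mem_image_of_last {i j k m : ℕ} {s : Fin (q - 2)}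
    (hs : s.1 + 3 = q) (hj : j < q)
    (hw : i + j + k + m * q + (s + 2) * q + 2 ≤ q ^ 2 + (s + 1)) (hkm : q ≤ k ∨ 1 ≤ m) :
    gkPhi q (i, j, k, m, Pi.single s 1) ∈ gkPhi q '' gkReduced q := by
  have hq : (s + 3) * q = q ^ 2 := by rw [hs, sq]
  have hqq : q ≤ q ^ 2 := Nat.le_self_pow two_ne_zero q
  rcases hkm with hk | hm
  · obtain ⟨k, rfl⟩ : ∃ k', k = k' + q := ⟨k - q, by omega⟩
    have e : gkPhi q (i, j, k + q, m, Pi.single s 1) = gkPhi q (i + 1, j, k, m, 0) := by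
      simp only [gkPhi_single, gkPhi_zero]; linear_combination q * hq
    rw [e]
    exact gkPhi_zero_mem_image hj (by linarith)
  obtain ⟨m, rfl⟩ : ∃ m', m = m' + 1 := ⟨m - 1, by omega⟩
  by_cases hjq : j + 1 < q
  · have e : gkPhi q (i, j, k, m + 1, Pi.single s 1) = gkPhi q (i + 1, j + 1, k, m, 0) := by
      simp only [gkPhi_single, gkPhi_zero]; linear_combination q * hq
    rw [e]
    exact gkPhi_zero_mem_image hjq (by linarith)
  · have hjq : j + 1 = q := by omega
    have e : gkPhi q (i, j, k, m + 1, Pi.single s 1) = gkPhi q (i + 1, 0, k + 1, m, 0) := by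
      simp only [gkPhi_single, gkPhi_zero]; linear_combination q * hq + hjq
    rw [e]
    exact gkPhi_zero_mem_image (by omega) (by linarith)

theorem gkPhi_single_mem_image {i j k m : ℕ} {s : Fin (q - 2)} (hj : j < q)
    (hw : i + j + k + m * q + (s + 2) * q + 2 ≤ q ^ 2 + (s + 1)) :
    gkPhi q (i, j, k, m, Pi.single s 1) ∈ gkPhi q '' gkReduced q := by
  have hsq : s.1 < q - 2 := s.2
  rcases Nat.eq_zero_or_pos m with rfl | hm
  · by_cases hik : i + k + (s + 2) * q + 2 ≤ q ^ 2
    · exact gkPhi_single_mem_image_of_le_sq hj (by simpa using hw) hik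
    by_cases hk : k < q
    · exact ⟨_, .inr (mk_mem_gkCalG3 hk (by simpa using hw) (by omega)), rfl⟩
    by_cases hs : s.1 + 1 < q - 2
    swap
    · exact gkPhi_single_mem_image_of_last (by omega) hj hw (.inl (by omega))
    obtain ⟨k, rfl⟩ : ∃ k', k = k' + q := ⟨k - q, by omega⟩
    have e : gkPhi q (i, j, k + q, 0, Pi.single s 1) =
        gkPhi q (i, j, k, 0, Pi.single ⟨s + 1, hs⟩ 1) := by
      simp only [gkPhi_single]; ring
    rw [e]
    exact gkPhi_single_mem_image hj (by dsimp only; linarith)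
  by_cases hs : s.1 + 1 < q - 2
  swap
  · exact gkPhi_single_mem_image_of_last (by omega) hj hw (.inr hm)
  obtain ⟨m, rfl⟩ : ∃ m', m = m' + 1 := ⟨m - 1, by omega⟩
  by_cases hjq : j + 1 < q
  · have e : gkPhi q (i, j, k, m + 1, Pi.single s 1) =
        gkPhi q (i, j + 1, k, m, Pi.single ⟨s + 1, hs⟩ 1) := by
      simp only [gkPhi_single]; ring
    rw [e]
    exact gkPhi_single_mem_image hjq (by dsimp only; linarith)
  · have hjq : j + 1 = q := by omega
    have e : gkPhi q (i, j, k, m + 1, Pi.single s 1) =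
        gkPhi q (i, 0, k + 1, m, Pi.single ⟨s + 1, hs⟩ 1) := by
      simp only [gkPhi_single]; linear_combination hjq
    rw [e]
    exact gkPhi_single_mem_image (by omega) (by dsimp only; linarith)
termination_by q - s

theorem exists_gkPhi_eq_of_add_single_add_single {i j k m : ℕ} {n : Fin (q - 2) → ℕ}
    {s t : Fin (q - 2)} (hj : j < q)
    (hw : gkWt q (i, j, k, m, n + Pi.single s 1 + Pi.single t 1) + 2 ≤ q ^ 2) :
    ∃ i' j' k' m' n', j' < q ∧ gkWt q (i', j', k', m', n') + 2 ≤ q ^ 2 ∧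
      ∑ x, n' x ≤ ∑ x, n x + 1 ∧
      gkPhi q (i', j', k', m', n') = gkPhi q (i, j, k, m, n + Pi.single s 1 + Pi.single t 1) := by
  have hs := s.2
  have ht := t.2
  have hsq : s.1 + 2 ≤ (s + 2) * q := by nlinarith
  have htq : t.1 + 2 ≤ (t + 2) * q := by nlinarith
  have hqq : q ≤ q * q := Nat.le_mul_self q
  simp only [gkWt, sum_add_single_one_mul] at hw
  rcases lt_trichotomy (s.1 + t + 4) q with hst | hst | hst
  · have hu : s.1 + t + 2 < q - 2 := by omega
    refine ⟨i, j, k, m, n + Pi.single ⟨s + t + 2, hu⟩ 1, hj, ?_, by rw [sum_add_single_one], ?_⟩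
    · have : (s + t + 2 + 2) * q = (s + 2) * q + (t + 2) * q := by ring
      simp only [gkWt, sum_add_single_one_mul]
      omega
    · simp only [gkPhi_add_single]; ring
  · refine ⟨i + 1, j, k, m, n, hj, by simp only [gkWt]; omega, by omega, ?_⟩
    simp only [gkPhi_add_single]; simp only [gkPhi]; linear_combination q ^ 2 * hst.symm
  rcases Nat.lt_or_ge (s.1 + t + 4) (q + 2) with hst' | hst'
  · have hst' : s.1 + t + 3 = q := by omega
    have hprod : (s + 2) * q + (t + 2) * q = q * q + q := by
      rw [← add_mul, show s.1 + 2 + (t + 2) = q + 1 by omega]; ring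
    rcases Nat.eq_zero_or_pos j with rfl | hj0
    · refine ⟨i + 1, 0, k + q, m, n, hj, by simp only [gkWt]; omega, by omega, ?_⟩
      simp only [gkPhi_add_single]; simp only [gkPhi]; linear_combination q ^ 2 * hst'.symm
    · obtain ⟨j, rfl⟩ : ∃ j', j = j' + 1 := ⟨j - 1, by omega⟩
      have : (m + 1) * q = m * q + q := by ring
      refine ⟨i + 1, j, k, m + 1, n, by omega, by simp only [gkWt]; omega, by omega, ?_⟩
      simp only [gkPhi_add_single]; simp only [gkPhi]; linear_combination q ^ 2 * hst'.symm
  · have hu : s.1 + t + 2 - q < q - 2 := by omega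
    have hu' : s.1 + t + 2 - q + q = s + t + 2 := by omega
    have hprod : (s + 2) * q + (t + 2) * q = (s + t + 2 - q + 2) * q + q * q := by
      rw [← add_mul, ← add_mul]; congr 1; omega
    refine ⟨i + 1, j, k, m, n + Pi.single ⟨s + t + 2 - q, hu⟩ 1, hj, ?_,
      by rw [sum_add_single_one], ?_⟩
    · simp only [gkWt, sum_add_single_one_mul]
      omega
    · simp only [gkPhi_add_single]; simp only [gkPhi]; linear_combination q ^ 2 * hu'

theorem gkPhi_mem_image {i j k m : ℕ} {n : Fin (q - 2) → ℕ} (hj : j < q)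
    (hw : gkWt q (i, j, k, m, n) + 2 ≤ q ^ 2) :
    gkPhi q (i, j, k, m, n) ∈ gkPhi q '' gkReduced q := by
  rcases eq_zero_or_eq_single_or_eq_add_single_add_single n with
    rfl | ⟨s, rfl⟩ | ⟨n, s, t, rfl⟩
  · exact gkPhi_zero_mem_image hj (by simpa using hw)
  · exact gkPhi_single_mem_image hj (by have := gkWt_single (q := q) i j k m s; omega)
  obtain ⟨i', j', k', m', n', hj', hw', hn', he⟩ :=
    exists_gkPhi_eq_of_add_single_add_single hj hw
  rw [← he]
  exact gkPhi_mem_image hj' hw'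
termination_by ∑ x, n x
decreasing_by subst_vars; simp only [sum_add_single_one]; omega

theorem gkG_eq_image_gkReduced (hq : 2 ≤ q) : gkG q = gkPhi q '' gkReduced q := by
  refine Set.Subset.antisymm ?_ (Set.image_mono fun t ht => ?_)
  · rintro _ ⟨⟨i, j, k, m, n⟩, ⟨hj, hw⟩, rfl⟩
    have : 4 ≤ q ^ 2 := by nlinarith
    exact gkPhi_mem_image (by dsimp only at hj; omega) (by omega)
  · obtain (ht | ht) | ht := ht <;> exact ht.1

theorem injOn_gkPhi_gkCalG1 (hq : 2 ≤ q) : Set.InjOn (gkPhi q) (gkCalG1 q) := by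
  intro _ h _ h' he
  obtain ⟨i, k, m, hw, rfl⟩ := (mem_gkCalG1_iff hq).1 h
  obtain ⟨i', k', m', hw', rfl⟩ := (mem_gkCalG1_iff hq).1 h'
  rw [gkPhi_zero_eq_digits, gkPhi_zero_eq_digits] at he
  obtain ⟨hm, hk, rfl⟩ := eq_and_eq_and_eq_of_digits_eq (by nlinarith) (by nlinarith)
    (by nlinarith) (by nlinarith) he
  obtain rfl : m = m' := by omega
  obtain rfl : k = k' := by omega
  rfl

theorem injOn_gkPhi_gkCalG2 (hq : 2 ≤ q) : Set.InjOn (gkPhi q) (gkCalG2 q) := by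
  intro _ h _ h' he
  obtain ⟨i, j, k, m, -, hk, hjm, -, rfl⟩ := (mem_gkCalG2_iff hq).1 h
  obtain ⟨i', j', k', m', -, hk', hjm', -, rfl⟩ := (mem_gkCalG2_iff hq).1 h'
  rw [gkPhi_zero_eq_digits, gkPhi_zero_eq_digits] at he
  obtain ⟨hjm, hkm, rfl⟩ := eq_and_eq_and_eq_of_digits_eq hjm hjm'
    (add_mul_lt_sq hk (by omega)) (add_mul_lt_sq hk' (by omega)) he
  obtain ⟨rfl, rfl⟩ := eq_and_eq_of_add_mul_eq hk hk' hkm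
  obtain rfl : j = j' := by omega
  rfl

theorem injOn_gkPhi_gkCalG3 : Set.InjOn (gkPhi q) (gkCalG3 q) := by
  intro _ h _ h' he
  obtain ⟨i, j, k, s, hk, hw, hik, rfl⟩ := mem_gkCalG3_iff.1 h
  obtain ⟨i', j', k', s', hk', hw', hik', rfl⟩ := mem_gkCalG3_iff.1 h'
  rw [gkPhi_single_eq_digits, gkPhi_single_eq_digits] at he
  have hs := s.2
  have hs' := s'.2
  obtain ⟨rfl, hks, rfl⟩ := eq_and_eq_and_eq_of_digits_eq (by omega) (by omega)
    (add_mul_lt_sq hk (by omega)) (add_mul_lt_sq hk' (by omega)) he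
  obtain ⟨rfl, hss⟩ := eq_and_eq_of_add_mul_eq hk hk' hks
  obtain rfl : s = s' := Fin.ext (by omega)
  rfl

theorem gkPhi_ne_of_mem_gkCalG1_of_mem_gkCalG2 (hq : 2 ≤ q) {t t' : GKTup q}
    (h : t ∈ gkCalG1 q) (h' : t' ∈ gkCalG2 q) : gkPhi q t ≠ gkPhi q t' := by
  intro he
  obtain ⟨i, k, m, hw, rfl⟩ := (mem_gkCalG1_iff hq).1 h
  obtain ⟨i', j', k', m', hj', hk', hjm', -, rfl⟩ := (mem_gkCalG2_iff hq).1 h'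
  rw [gkPhi_zero_eq_digits, gkPhi_zero_eq_digits] at he
  obtain ⟨hmj, hkm, rfl⟩ := eq_and_eq_and_eq_of_digits_eq (by nlinarith) hjm' (by nlinarith)
    (add_mul_lt_sq hk' (by omega)) he
  -- `m = j' + m' > m'`, so `k + q m = k' + q m'` forces `k' ≥ q`
  nlinarith

theorem gkPhi_ne_of_mem_gkCalG1_of_mem_gkCalG3 (hq : 2 ≤ q) {t t' : GKTup q}
    (h : t ∈ gkCalG1 q) (h' : t' ∈ gkCalG3 q) : gkPhi q t ≠ gkPhi q t' := by
  intro he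
  obtain ⟨i, k, m, hw, rfl⟩ := (mem_gkCalG1_iff hq).1 h
  obtain ⟨i', j', k', s', hk', hw', hik', rfl⟩ := mem_gkCalG3_iff.1 h'
  rw [gkPhi_zero_eq_digits, gkPhi_single_eq_digits] at he
  have hs' := s'.2
  obtain ⟨-, hkm, rfl⟩ := eq_and_eq_and_eq_of_digits_eq (by nlinarith) (by omega) (by nlinarith)
    (add_mul_lt_sq hk' (by omega)) he
  -- `i + k + q m` is at most `q ^ 2 - 2` for `𝒢₁` and at least `q ^ 2 - 1` for `𝒢₃`
  nlinarith

theorem gkPhi_ne_of_mem_gkCalG2_of_mem_gkCalG3 (hq : 2 ≤ q) {t t' : GKTup q}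
    (h : t ∈ gkCalG2 q) (h' : t' ∈ gkCalG3 q) : gkPhi q t ≠ gkPhi q t' := by
  intro he
  obtain ⟨i, j, k, m, -, hk, hjm, hw, rfl⟩ := (mem_gkCalG2_iff hq).1 h
  obtain ⟨i', j', k', s', hk', hw', hik', rfl⟩ := mem_gkCalG3_iff.1 h'
  rw [gkPhi_zero_eq_digits, gkPhi_single_eq_digits] at he
  have hs' := s'.2
  obtain ⟨-, hkm, rfl⟩ := eq_and_eq_and_eq_of_digits_eq hjm (by omega)
    (add_mul_lt_sq hk (by omega)) (add_mul_lt_sq hk' (by omega)) he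
  obtain ⟨rfl, rfl⟩ := eq_and_eq_of_add_mul_eq hk hk' hkm
  omega

theorem injOn_gkPhi_gkReduced (hq : 2 ≤ q) : Set.InjOn (gkPhi q) (gkReduced q) := by
  rintro t ((h | h) | h) t' ((h' | h') | h') he
  · exact injOn_gkPhi_gkCalG1 hq h h' he
  · exact absurd he (gkPhi_ne_of_mem_gkCalG1_of_mem_gkCalG2 hq h h')
  · exact absurd he (gkPhi_ne_of_mem_gkCalG1_of_mem_gkCalG3 hq h h')
  · exact absurd he.symm (gkPhi_ne_of_mem_gkCalG1_of_mem_gkCalG2 hq h' h)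
  · exact injOn_gkPhi_gkCalG2 hq h h' he
  · exact absurd he (gkPhi_ne_of_mem_gkCalG2_of_mem_gkCalG3 hq h h')
  · exact absurd he.symm (gkPhi_ne_of_mem_gkCalG1_of_mem_gkCalG3 hq h' h)
  · exact absurd he.symm (gkPhi_ne_of_mem_gkCalG2_of_mem_gkCalG3 hq h' h)
  · exact injOn_gkPhi_gkCalG3 h h' he

def gkParams1 (q : ℕ) : Finset ((_ : ℕ) × (_ : ℕ) × ℕ) :=
  (range q).sigma fun m => (range (q ^ 2 - 1 - m * q)).sigma fun k => range (q ^ 2 - 1 - m * q - k)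

def gkParams2 (q : ℕ) : Finset ((_ : ℕ) × (_ : ℕ) × (_ : ℕ) × ℕ) :=
  (range (q - 1)).sigma fun j => (range (q - 1 - j)).sigma fun m =>
    (range q).sigma fun k => range (q ^ 2 - 2 - j - k - m * q)

-- `x` is the excess of `i` over its least admissible value `q ^ 2 - 1 - k - (s + 2) * q`.
def gkParams3 (q : ℕ) : Finset ((_ : Fin (q - 2)) × (_ : ℕ) × (_ : ℕ) × ℕ) :=
  univ.sigma fun s => (range q).sigma fun _ => (range (s + 1)).sigma fun j => range (s + 1 - j)

theorem gkCalG1_eq_image (hq : 2 ≤ q) :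
    gkCalG1 q =
      ((gkParams1 q).image fun x => ((x.2.2, 0, x.2.1, x.1, 0) : GKTup q) : Set (GKTup q)) := by
  ext t
  rw [mem_gkCalG1_iff hq]
  simp only [gkParams1, coe_image, Set.mem_image, mem_coe, mem_sigma, mem_range, Sigma.exists]
  constructor
  · rintro ⟨i, k, m, hw, rfl⟩
    exact ⟨m, k, i, ⟨by nlinarith, by omega, by omega⟩, rfl⟩
  · rintro ⟨m, k, i, ⟨-, hk, hi⟩, rfl⟩
    exact ⟨i, k, m, by omega, rfl⟩

theorem gkCalG2_eq_image (hq : 2 ≤ q) :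
    gkCalG2 q =
      ((gkParams2 q).image fun x => ((x.2.2.2, x.1 + 1, x.2.2.1, x.2.1, 0) : GKTup q) :
        Set (GKTup q)) := by
  ext t
  rw [mem_gkCalG2_iff hq]
  simp only [gkParams2, coe_image, Set.mem_image, mem_coe, mem_sigma, mem_range, Sigma.exists]
  constructor
  · rintro ⟨i, j, k, m, hj, hk, hjm, hw, rfl⟩
    obtain ⟨j, rfl⟩ : ∃ j', j = j' + 1 := ⟨j - 1, by omega⟩
    exact ⟨j, m, k, i, ⟨by omega, by omega, hk, by omega⟩, rfl⟩
  · rintro ⟨j, m, k, i, ⟨-, hm, hk, hi⟩, rfl⟩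
    exact ⟨i, j + 1, k, m, by omega, hk, by omega, by omega, rfl⟩

theorem gkCalG3_eq_image :
    gkCalG3 q =
      ((gkParams3 q).image fun x =>
        ((q ^ 2 - 1 - x.2.1 - (x.1 + 2) * q + x.2.2.2, x.2.2.1, x.2.1, 0, Pi.single x.1 1) :
          GKTup q) : Set (GKTup q)) := by
  ext t
  rw [mem_gkCalG3_iff]
  simp only [gkParams3, coe_image, Set.mem_image, mem_coe, mem_sigma, mem_univ, mem_range,
    Sigma.exists, true_and]
  constructor
  · rintro ⟨i, j, k, s, hk, hw, hik, rfl⟩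
    have : (s + 2) * q + q ≤ q ^ 2 := by
      have : s.1 + 3 ≤ q := by omega
      nlinarith
    refine ⟨s, k, j, i + k + (s + 2) * q + 1 - q ^ 2, ⟨hk, by omega, by omega⟩, ?_⟩
    congr 1
    omega
  · rintro ⟨s, k, j, x, ⟨hk, hj, hx⟩, rfl⟩
    have : (s + 2) * q + q ≤ q ^ 2 := by
      have : s.1 + 3 ≤ q := by omega
      nlinarith
    exact ⟨_, j, k, s, hk, by omega, by omega, rfl⟩

theorem card_gkParams1 :
    12 * ((gkParams1 q).card : ℚ) = q ^ 2 * (q ^ 2 - 1) * (2 * q + 3) := by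
  have h2 : (gkParams1 q).card * 2 =
      ∑ m ∈ range q, (q ^ 2 - 1 - m * q) * (q ^ 2 - 1 - m * q + 1) := by
    rw [gkParams1, card_sigma, sum_mul]
    exact sum_congr rfl fun m _ => by rw [card_sigma]; simpa using sum_range_sub_mul_two _
  have hcast : ∀ m ∈ range q, (((q ^ 2 - 1 - m * q) * (q ^ 2 - 1 - m * q + 1) : ℕ) : ℚ) =
      ((q : ℚ) ^ 4 - q ^ 2) + (q - 2 * q ^ 3) * m + q ^ 2 * m ^ 2 := by
    intro m hm
    have hmq : m * q + 1 ≤ q ^ 2 := by have := mem_range.1 hm; nlinarith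
    rw [Nat.cast_mul, Nat.cast_add, Nat.cast_sub (by omega), Nat.cast_sub (by omega)]
    push_cast
    ring
  have h2' := congrArg (Nat.cast : ℕ → ℚ) h2
  rw [Nat.cast_mul, Nat.cast_sum, sum_congr rfl hcast] at h2'
  linear_combination 6 * h2' + sum_range_quadratic ((q : ℚ) ^ 4 - q ^ 2) (q - 2 * q ^ 3) (q ^ 2) q

theorem card_gkParams2 (hq : 1 ≤ q) :
    12 * ((gkParams2 q).card : ℚ) = q ^ 2 * (q ^ 2 - 1) * (4 * q - 5) := by
  have sum_k : ∀ j m, j + m + 1 < q →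
      ∑ k ∈ range q, ((q ^ 2 - 2 - j - k - m * q : ℕ) : ℚ) =
        (q ^ 3 - q ^ 2 / 2 - 3 * q / 2 - q * j) + (-q ^ 2) * m := by
    intro j m hjm
    have hcast : ∀ k ∈ range q, ((q ^ 2 - 2 - j - k - m * q : ℕ) : ℚ) =
        (q ^ 2 - 2 - j - m * q) + (-1) * k + 0 * k ^ 2 := by
      intro k hk
      have : j + k + m * q + 2 ≤ q ^ 2 := by have := mem_range.1 hk; nlinarith
      rw [show q ^ 2 - 2 - j - k - m * q = q ^ 2 - (j + k + m * q + 2) by omega,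
        Nat.cast_sub this]
      push_cast
      ring
    rw [sum_congr rfl hcast]
    linear_combination (1 / 6 : ℚ) * sum_range_quadratic ((q : ℚ) ^ 2 - 2 - j - m * q) (-1) 0 q
  have sum_m : ∀ j, j + 1 < q →
      ∑ m ∈ range (q - 1 - j), ∑ k ∈ range q, ((q ^ 2 - 2 - j - k - m * q : ℕ) : ℚ) =
        ((q ^ 3 - q ^ 2 / 2 - 3 * q / 2) * (q - 1) - q ^ 2 * (q - 1) * (q - 2) / 2) +
          (-(q ^ 3 - q ^ 2 / 2 - 3 * q / 2) - q * (q - 1) + q ^ 2 * (2 * q - 3) / 2) * j +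
          (q - q ^ 2 / 2) * j ^ 2 := by
    intro j hj
    rw [sum_congr rfl fun m hm => sum_k j m (by have := mem_range.1 hm; omega)]
    have hM : ((q - 1 - j : ℕ) : ℚ) = q - 1 - j := by
      rw [Nat.cast_sub (by omega), Nat.cast_sub hq]; simp
    have := sum_range_quadratic ((q : ℚ) ^ 3 - q ^ 2 / 2 - 3 * q / 2 - q * j) (-(q : ℚ) ^ 2) 0
      (q - 1 - j)
    simp only [zero_mul, add_zero, hM] at this
    linear_combination (1 / 6 : ℚ) * this
  have hN : ((q - 1 : ℕ) : ℚ) = q - 1 := by rw [Nat.cast_sub hq]; simp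
  simp only [gkParams2, card_sigma, card_range, Nat.cast_sum]
  rw [sum_congr rfl fun j hj => sum_m j (by have := mem_range.1 hj; omega)]
  have := sum_range_quadratic
    (((q : ℚ) ^ 3 - q ^ 2 / 2 - 3 * q / 2) * (q - 1) - q ^ 2 * (q - 1) * (q - 2) / 2)
    (-((q : ℚ) ^ 3 - q ^ 2 / 2 - 3 * q / 2) - q * (q - 1) + q ^ 2 * (2 * q - 3) / 2)
    ((q : ℚ) - q ^ 2 / 2) (q - 1)
  rw [hN] at this
  linear_combination 2 * this

theorem card_gkParams3 (hq : 2 ≤ q) :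
    6 * ((gkParams3 q).card : ℚ) = q ^ 2 * (q - 1) * (q - 2) := by
  have h2 : (gkParams3 q).card * 2 = ∑ s ∈ range (q - 2), q * ((s + 1) * (s + 2)) := by
    rw [← Fin.sum_univ_eq_sum_range (fun s => q * ((s + 1) * (s + 2))), gkParams3, card_sigma,
      sum_mul]
    refine sum_congr rfl fun s _ => ?_
    simp only [card_sigma, card_range, sum_const, smul_eq_mul, mul_assoc]
    rw [sum_range_sub_mul_two]
  have h2' := congrArg (Nat.cast : ℕ → ℚ) h2
  push_cast at h2'
  rw [sum_congr rfl fun (s : ℕ) _ =>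
    show (q : ℚ) * ((s + 1) * (s + 2)) = 2 * q + 3 * q * s + q * s ^ 2 by ring] at h2'
  have hN : ((q - 2 : ℕ) : ℚ) = q - 2 := by rw [Nat.cast_sub hq]; simp
  have := sum_range_quadratic (2 * (q : ℚ)) (3 * q) q (q - 2)
  rw [hN] at this
  linear_combination 3 * h2' + (1 / 2 : ℚ) * this

theorem ncard_gkCalG1 (hq : 2 ≤ q) :
    12 * ((gkCalG1 q).ncard : ℚ) = q ^ 2 * (q ^ 2 - 1) * (2 * q + 3) := by
  rw [gkCalG1_eq_image hq, Set.ncard_coe_finset, card_image_of_injective _ ?_]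
  · exact card_gkParams1
  rintro ⟨m, k, i⟩ ⟨m', k', i'⟩ h
  simp only [Prod.mk.injEq] at h
  obtain ⟨rfl, -, rfl, rfl, -⟩ := h
  rfl

theorem ncard_gkCalG2 (hq : 2 ≤ q) :
    12 * ((gkCalG2 q).ncard : ℚ) = q ^ 2 * (q ^ 2 - 1) * (4 * q - 5) := by
  rw [gkCalG2_eq_image hq, Set.ncard_coe_finset, card_image_of_injective _ ?_]
  · exact card_gkParams2 (by omega)
  rintro ⟨j, m, k, i⟩ ⟨j', m', k', i'⟩ h
  simp only [Prod.mk.injEq, Nat.add_right_cancel_iff] at h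
  obtain ⟨rfl, rfl, rfl, rfl, -⟩ := h
  rfl

theorem ncard_gkCalG3 (hq : 2 ≤ q) :
    6 * ((gkCalG3 q).ncard : ℚ) = q ^ 2 * (q - 1) * (q - 2) := by
  rw [gkCalG3_eq_image, Set.ncard_coe_finset, card_image_of_injective _ ?_]
  · exact card_gkParams3 hq
  rintro ⟨s, k, j, x⟩ ⟨s', k', j', x'⟩ h
  simp only [Prod.mk.injEq] at h
  obtain ⟨hx, rfl, rfl, -, hs⟩ := h
  obtain rfl : s = s' := by simpa [Pi.single_apply] using congrFun hs s
  obtain rfl : x = x' := by omega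
  rfl

theorem disjoint_gkCalG1_gkCalG2 : Disjoint (gkCalG1 q) (gkCalG2 q) :=
  Set.disjoint_left.2 fun _ h h' => by have := h.2.1; have := h'.2.1; omega

theorem disjoint_gkCalG1_union_gkCalG2_gkCalG3 :
    Disjoint (gkCalG1 q ∪ gkCalG2 q) (gkCalG3 q) := by
  refine Set.disjoint_left.2 fun t h ⟨_, _, _, s, hs, _⟩ => ?_
  obtain ⟨_, _, hn⟩ | ⟨_, _, _, _, _, hn⟩ := h <;> simp [hn] at hs

theorem ncard_gkReduced (hq : 2 ≤ q) :
    2 * ((gkReduced q).ncard : ℚ) = q ^ 5 - 2 * q ^ 3 + q ^ 2 := by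
  have fin₁ : (gkCalG1 q).Finite := gkCalG1_eq_image hq ▸ finite_toSet _
  have fin₂ : (gkCalG2 q).Finite := gkCalG2_eq_image hq ▸ finite_toSet _
  have fin₃ : (gkCalG3 q).Finite := gkCalG3_eq_image ▸ finite_toSet _
  rw [gkReduced,
    Set.ncard_union_eq disjoint_gkCalG1_union_gkCalG2_gkCalG3 (fin₁.union fin₂) fin₃,
    Set.ncard_union_eq disjoint_gkCalG1_gkCalG2 fin₁ fin₂]
  push_cast
  linear_combination (1 / 6 : ℚ) * ncard_gkCalG1 hq + (1 / 6 : ℚ) * ncard_gkCalG2 hq +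
    (1 / 3 : ℚ) * ncard_gkCalG3 hq

end GK

/-- `|G| = (q^5 - 2q^3 + q^2)/2` and `G = G₁ ∪ G₂ ∪ G₃`. -/
theorem gk_G_card (q : ℕ) (hq : IsPrimePow q) :
    (gkG q).ncard = (q ^ 5 - 2 * q ^ 3 + q ^ 2) / 2 ∧
    gkG q = (gkPhi q '' gkCalG1 q) ∪ (gkPhi q '' gkCalG2 q) ∪ (gkPhi q '' gkCalG3 q) := by
  have hq2 : 2 ≤ q := hq.two_le
  have hG := gkG_eq_image_gkReduced hq2
  refine ⟨?_, by rw [hG, gkReduced, Set.image_union, Set.image_union]⟩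
  have hcard : (gkG q).ncard * 2 + 2 * q ^ 3 = q ^ 5 + q ^ 2 := by
    rw [hG, (injOn_gkPhi_gkReduced hq2).ncard_image]
    exact_mod_cast (by linear_combination ncard_gkReduced hq2 :
      ((gkReduced q).ncard : ℚ) * 2 + 2 * q ^ 3 = q ^ 5 + q ^ 2)
  have : 2 * q ^ 3 ≤ q ^ 5 := by
    rw [show q ^ 5 = q ^ 2 * q ^ 3 by ring]
    exact Nat.mul_le_mul_right _ (by nlinarith)
  omega
end

section
/- For each i with 0 ≤ i ≤ q − 1, the identity j·q^3 + i·(q^4 − q^3 − q^2 + q − 1) = (iq − jq^2)(q^3 − q + 1) + (jq^2 − i)(q^3 + 1) holds for all integers j; in particular, for 1 ≤ j ≤ q − 1 the integer (iq − jq^2 + k₁)(q^3 − q + 1) + (jq^2 − i + k₂)(q^3 + 1) with 0 ≤ k₁ ≤ q − 1 and 0 ≤ k₂ ≤ q^3 − q − jq^2 + i satisfies iq − jq^2 + k₁ < 0 and 0 ≤ jq^2 − i + k₂ ≤ q^3 − q, and hence does not lie in the numerical semigroup S generated by q^3 − q + 1 and q^3 + 1. -/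
/-!
Since `q^3 - q + 1` and `q^3 + 1` are coprime, every integer has a unique representation
`a (q^3 - q + 1) + b (q^3 + 1)` with `0 ≤ b < q^3 - q + 1`, and it lies in `S` only if `a ≥ 0`.
The bounds on `i, j, k₁, k₂` put the given integer in this normal form with `a < 0`.
-/

def gkS (q : ℤ) : AddSubmonoid ℤ :=
  AddSubmonoid.closure {q ^ 3 - q + 1, q ^ 3 + 1}

theorem IsCoprime.eq_of_mul_add_mul_eq {x y a b a' b' : ℤ} (hxy : IsCoprime x y)
    (hb : 0 ≤ b) (hbx : b < x) (hb' : 0 ≤ b') (hb'x : b' < x)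
    (h : a * x + b * y = a' * x + b' * y) : a = a' ∧ b = b' := by
  have hdvd : x ∣ b' - b := hxy.dvd_of_dvd_mul_right ⟨a - a', by linear_combination -h⟩
  have hbb' : b = b' := by
    have := Int.eq_zero_of_abs_lt_dvd hdvd (abs_sub_lt_iff.mpr ⟨by omega, by omega⟩)
    omega
  subst hbb'
  exact ⟨mul_right_cancel₀ (show x ≠ 0 by omega) (by linarith), rfl⟩

theorem nonneg_of_mul_add_mul_mem_closure_pair {x y a b : ℤ} (hxy : IsCoprime x y)
    (hy : 0 ≤ y) (hb : 0 ≤ b) (hbx : b < x)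
    (hmem : a * x + b * y ∈ AddSubmonoid.closure {x, y}) : 0 ≤ a := by
  have hx : 0 < x := by omega
  obtain ⟨m, n, hmn⟩ := (AddSubmonoid.mem_closure_pair _ _ _).mp hmem
  simp only [nsmul_eq_mul] at hmn
  -- Reduce the coefficient of `y` modulo `x` and compare with the given representation.
  have hrepr : (m + (n / x) * y) * x + (n % x) * y = a * x + b * y := by
    rw [← hmn]
    linear_combination y * Int.emod_add_mul_ediv (n : ℤ) x
  have ha := (hxy.eq_of_mul_add_mul_eq (Int.emod_nonneg _ hx.ne') (Int.emod_lt_of_pos _ hx)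
    hb hbx hrepr).1
  rw [← ha]
  have : 0 ≤ (n : ℤ) / x := Int.ediv_nonneg (by positivity) hx.le
  positivity

theorem isCoprime_gk_generators (q : ℤ) : IsCoprime (q ^ 3 - q + 1) (q ^ 3 + 1) :=
  ⟨q ^ 2, 1 - q ^ 2, by ring⟩

theorem gk_Sij_not_in_S_general (q : ℤ) (i : ℤ)
    (hi1 : i ≤ q - 1) :
    (∀ j : ℤ, j * q ^ 3 + i * (q ^ 4 - q ^ 3 - q ^ 2 + q - 1)
        = (i * q - j * q ^ 2) * (q ^ 3 - q + 1) + (j * q ^ 2 - i) * (q ^ 3 + 1)) ∧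
    (∀ j : ℤ, 1 ≤ j → j ≤ q - 1 → ∀ k₁ k₂ : ℤ,
      0 ≤ k₁ → k₁ ≤ q - 1 → 0 ≤ k₂ → k₂ ≤ q ^ 3 - q - j * q ^ 2 + i →
      i * q - j * q ^ 2 + k₁ < 0 ∧
      0 ≤ j * q ^ 2 - i + k₂ ∧ j * q ^ 2 - i + k₂ ≤ q ^ 3 - q ∧
      (i * q - j * q ^ 2 + k₁) * (q ^ 3 - q + 1) + (j * q ^ 2 - i + k₂) * (q ^ 3 + 1)
        ∉ gkS q) := by
  refine ⟨fun j => by ring, fun j hj1 hjq k₁ k₂ _ hk₁ hk₂0 hk₂ => ?_⟩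
  have hq : 2 ≤ q := by omega
  have hA : i * q - j * q ^ 2 + k₁ < 0 := by nlinarith
  have hB0 : 0 ≤ j * q ^ 2 - i + k₂ := by nlinarith
  have hB : j * q ^ 2 - i + k₂ ≤ q ^ 3 - q := by linarith
  refine ⟨hA, hB0, hB, fun hmem => hA.not_ge ?_⟩
  exact nonneg_of_mul_add_mul_mem_closure_pair (isCoprime_gk_generators q)
    (by positivity) hB0 (by linarith) hmem

/-- The identity `jq^3 + i(q^4-q^3-q^2+q-1) = (iq-jq^2)(q^3-q+1) + (jq^2-i)(q^3+1)` holds;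
and for `1 ≤ j ≤ q-1`, `0 ≤ k₁ ≤ q-1`, `0 ≤ k₂ ≤ q^3-q-jq^2+i`, the integer
`(iq-jq^2+k₁)(q^3-q+1) + (jq^2-i+k₂)(q^3+1)` has `iq-jq^2+k₁ < 0`,
`0 ≤ jq^2-i+k₂ ≤ q^3-q`, and does not lie in `S`. -/
theorem gk_Sij_not_in_S (q : ℤ) (hq : IsPrimePow q) (i : ℤ)
    (hi0 : 0 ≤ i) (hi1 : i ≤ q - 1) :
    (∀ j : ℤ, j * q ^ 3 + i * (q ^ 4 - q ^ 3 - q ^ 2 + q - 1)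
        = (i * q - j * q ^ 2) * (q ^ 3 - q + 1) + (j * q ^ 2 - i) * (q ^ 3 + 1)) ∧
    (∀ j : ℤ, 1 ≤ j → j ≤ q - 1 → ∀ k₁ k₂ : ℤ,
      0 ≤ k₁ → k₁ ≤ q - 1 → 0 ≤ k₂ → k₂ ≤ q ^ 3 - q - j * q ^ 2 + i →
      i * q - j * q ^ 2 + k₁ < 0 ∧
      0 ≤ j * q ^ 2 - i + k₂ ∧ j * q ^ 2 - i + k₂ ≤ q ^ 3 - q ∧
      (i * q - j * q ^ 2 + k₁) * (q ^ 3 - q + 1) + (j * q ^ 2 - i + k₂) * (q ^ 3 + 1)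
        ∉ gkS q) :=
  gk_Sij_not_in_S_general q i hi1
end
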